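/- arXiv:2502.04726 — 7 statements merged into one kernel-verified Lean document; each statement's English description precedes it below -/
import Mathlib

section
/- In a graph G with minimum degree at least 2, every path Q of G is contained in a lollipop, i.e., there exists a pair (P, C) where P is a path, C is a cycle, P and C share exactly one vertex which is an endpoint of P, and all vertices of Q belong to V(P) ∪ V(C). -/
/-!
Extend `Q` beyond its end `b` to a path `R` that cannot be extended further, so that every
neighbour of its last vertex `u` lies on `R`. Since `u` has degree at least two, it has a
neighbour `x` other than its predecessor on `R`. The edge `ux` closes the segment of `R` from
`x` to `u` into a cycle, and the segment from `a` to `x` is the stick of the lollipop.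
-/

namespace SimpleGraph.Walk

variable {V : Type*} {G : SimpleGraph V}

def IsLollipop {p c : V} (P : G.Walk p c) (C : G.Walk c c) : Prop :=
  P.IsPath ∧ C.IsCycle ∧ ∀ x ∈ P.support, x ∈ C.support → x = c

theorem IsPath.exists_maximal_extension [Fintype V] {u v : V} {R : G.Walk u v}
    (hR : R.IsPath) :
    ∃ (v' : V) (R' : G.Walk u v'), R'.IsPath ∧ R.support ⊆ R'.support ∧
      ∀ w, G.Adj v' w → w ∈ R'.support := by
  by_cases hmax : ∀ w, G.Adj v w → w ∈ R.support
  · exact ⟨v, R, hR, List.Subset.refl _, hmax⟩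
  push Not at hmax
  obtain ⟨w, hvw, hw⟩ := hmax
  have hRw : (R.concat hvw).IsPath := hR.concat hw hvw
  obtain ⟨v', R', hR', hsub, hmax'⟩ := hRw.exists_maximal_extension
  refine ⟨v', R', hR', ?_, hmax'⟩
  rw [support_concat] at hsub
  exact List.Subset.trans (List.subset_append_left _ _) hsub
termination_by Fintype.card V - R.length
decreasing_by
  have := hRw.length_lt
  rw [length_concat] at this ⊢
  omega

theorem IsPath.exists_lollipop_of_adj {u v x : V} {R : G.Walk u v} (hR : R.IsPath)
    (hx : x ∈ R.support) (hvx : G.Adj v x) (hchord : s(v, x) ∉ R.edges) :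
    ∃ (p c : V) (P : G.Walk p c) (C : G.Walk c c), P.IsLollipop C ∧
      ∀ y ∈ R.support, y ∈ P.support ∨ y ∈ C.support := by
  classical
  have hspec : (R.takeUntil x hx).append (R.dropUntil x hx) = R := R.take_spec hx
  have hC : (cons hvx.symm (R.dropUntil x hx).reverse).IsCycle := by
    rw [cons_isCycle_iff, edges_reverse, List.mem_reverse]
    exact ⟨(hR.dropUntil hx).reverse,
      fun h => hchord (R.edges_dropUntil_subset_edges hx (Sym2.eq_swap ▸ h))⟩
  refine ⟨u, x, R.takeUntil x hx, _, ⟨hR.takeUntil hx, hC, ?_⟩, ?_⟩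
  · intro y hyP hyC
    rw [support_cons, List.mem_cons, support_reverse, List.mem_reverse] at hyC
    rcases hyC with rfl | hyC
    · rfl
    by_contra hne
    exact (hspec ▸ hR).ne_of_mem_support_of_append hne hyP hyC rfl
  · intro y hy
    rw [← hspec, mem_support_append_iff] at hy
    rw [support_cons, List.mem_cons, support_reverse, List.mem_reverse]
    tauto

end SimpleGraph.Walk

open SimpleGraph Walk in
/-- In a graph with minimum degree at least 2, every path is contained in a lollipop:
a pair `(P, C)` of a path `P` and a cycle `C` sharing exactly one vertex, which is an
endpoint of `P`, such that all vertices of `Q` lie in `V(P) ∪ V(C)`. -/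
theorem path_contained_in_lollipop {V : Type*} [Fintype V]
    (G : SimpleGraph V) [DecidableRel G.Adj]
    (hdeg : ∀ v : V, 2 ≤ G.degree v)
    {a b : V} (Q : G.Walk a b) (hQ : Q.IsPath) :
    ∃ (p c : V) (P : G.Walk p c) (C : G.Walk c c),
      P.IsPath ∧ C.IsCycle ∧
      (∀ x : V, x ∈ P.support → x ∈ C.support → x = c) ∧
      (∀ x ∈ Q.support, x ∈ P.support ∨ x ∈ C.support) := by
  obtain ⟨u, R, hR, hQR, hmax⟩ := hQ.exists_maximal_extension
  obtain ⟨x, hux, hx⟩ : ∃ x, G.Adj u x ∧ x ≠ R.penultimate := by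
    have : 1 < (G.neighborFinset u).card := by
      rw [card_neighborFinset_eq_degree]; exact hdeg u
    simpa using Finset.exists_mem_ne this R.penultimate
  obtain ⟨p, c, P, C, ⟨hP, hC, hPC⟩, hcover⟩ :=
    hR.exists_lollipop_of_adj (hmax x hux) hux (fun h => hx (hR.eq_penultimate_of_mem_edges h))
  exact ⟨p, c, P, C, hP, hC, hPC, fun y hy => hcover y (hQR hy)⟩
end

section
/- If G has minimum degree at least k ≥ 2, then G contains a cycle C containing at least k+1 vertices each having at least k neighbors in C. -/
/-!
Take a longest path `P = p₀ ⋯ p_{m-1}`, chosen among all longest paths so that the farthest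
neighbour `p_T` of `p₀` is as far along as possible, and let `C = p₀ ⋯ p_T` closed by the edge
`p_T p₀`. In every longest path whose first `T + 1` vertices are those of `C`, the first vertex
has all its neighbours (at least `k`) in `C`. A Pósa rotation, which reverses the initial segment
`p₀ ⋯ p_{j-1}` when `p₀ ~ p_j`, stays in this class and makes `p_{j-1}` the first vertex; hence
the predecessors of the `k` neighbours of `p₀` are `k` vertices with `k` neighbours in `C`.
If these were all, every rotated path would produce exactly the same `k` vertices, and reading
this off the rotation at each neighbour shows that all of them are adjacent to `p_T`: then `p_T`
is one more.
-/

namespace List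

variable {α : Type*}

def posaRotate (l : List α) (j : ℕ) : List α := (l.take j).reverse ++ l.drop j

theorem posaRotate_perm (l : List α) (j : ℕ) : l.posaRotate j ~ l := by
  simpa only [posaRotate, take_append_drop] using (reverse_perm (l.take j)).append_right (l.drop j)

@[simp]
theorem length_posaRotate (l : List α) (j : ℕ) : (l.posaRotate j).length = l.length :=
  (posaRotate_perm l j).length_eq

theorem take_posaRotate (l : List α) {j n : ℕ} (h : j ≤ n) :
    (l.posaRotate j).take n = (l.take n).posaRotate j := by
  rcases le_total j l.length with hj | hj
  · simp [posaRotate, take_append, take_take, drop_take, Nat.min_eq_left hj, h]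
  · simp [posaRotate, take_of_length_le hj, take_of_length_le (hj.trans h), drop_eq_nil_of_le hj,
      hj.trans h]

theorem getElem_posaRotate_of_le (l : List α) {j i : ℕ} (hji : j ≤ i)
    (hi : i < (l.posaRotate j).length) :
    (l.posaRotate j)[i] = l[i]'(by simpa using hi) := by
  have : min j l.length = j := Nat.min_eq_left (by simp at hi; omega)
  simp [posaRotate, getElem_append_right, hji, this, Nat.add_sub_cancel' hji]

theorem getElem_posaRotate_zero (l : List α) {j : ℕ} (h1 : 1 ≤ j) (hj : j ≤ l.length) :
    (l.posaRotate j)[0]'(by simp; omega) = l[j - 1] := by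
  simp only [posaRotate]
  rw [getElem_append_left (by simp; omega)]
  simp [getElem_reverse, Nat.min_eq_left hj]

theorem IsChain.posaRotate {r : α → α → Prop} [Std.Symm r] {l : List α} (hl : l.IsChain r)
    {j : ℕ} (h1 : 1 ≤ j) (hj : j < l.length) (hr : r l[0] l[j]) :
    (l.posaRotate j).IsChain r := by
  refine (isChain_reverse.2 ((hl.take j).imp fun _ _ h => symm h)).append (hl.drop j) ?_
  simp [getElem?_eq_getElem hj, head?_eq_getElem?, show 0 < j by omega,
    getElem?_eq_getElem (show 0 < l.length by omega), hr]

/-- The entry just before `a` in `l`, with junk value `a` if `a` is the head of `l` or absent. -/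
def entryBefore [DecidableEq α] (l : List α) (a : α) : α := l.getD (l.idxOf a - 1) a

theorem Nodup.entryBefore_getElem [DecidableEq α] {l : List α} (hl : l.Nodup) {i : ℕ}
    (hi : i < l.length) : l.entryBefore l[i] = l[i - 1] := by
  rw [entryBefore, hl.idxOf_getElem, getD_eq_getElem]

end List

theorem Set.exists_max_image_of_forall_le {α : Type*} (f : α → ℕ) {s : Set α} {n : ℕ}
    (hs : s.Nonempty) (hle : ∀ a ∈ s, f a ≤ n) : ∃ a ∈ s, ∀ b ∈ s, f b ≤ f a := by
  classical
  obtain ⟨a₀, ha₀⟩ := hs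
  obtain ⟨a, ha, hfa⟩ : ∃ a ∈ s, f a = Nat.findGreatest (fun t => ∃ a ∈ s, f a = t) n :=
    Nat.findGreatest_spec (P := fun t => ∃ a ∈ s, f a = t) (hle a₀ ha₀) ⟨a₀, ha₀, rfl⟩
  exact ⟨a, ha, fun b hb => hfa ▸ Nat.le_findGreatest (hle b hb) ⟨b, hb, rfl⟩⟩

open Finset

namespace SimpleGraph

variable {V : Type*} {G : SimpleGraph V}

variable (G) in
structure IsPathSupport (l : List V) : Prop where
  isChain : l.IsChain G.Adj
  nodup : l.Nodup

namespace IsPathSupport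

variable {l : List V}

theorem take (hl : G.IsPathSupport l) (n : ℕ) : G.IsPathSupport (l.take n) :=
  ⟨hl.isChain.take n, hl.nodup.sublist (List.take_sublist n l)⟩

theorem posaRotate (hl : G.IsPathSupport l) {j : ℕ} (h1 : 1 ≤ j) (hj : j < l.length)
    (hadj : G.Adj l[0] l[j]) : G.IsPathSupport (l.posaRotate j) := by
  have := G.symm
  exact ⟨hl.isChain.posaRotate h1 hj hadj, (l.posaRotate_perm j).nodup_iff.2 hl.nodup⟩

theorem mem_of_adj_getElem_zero (hl : G.IsPathSupport l)
    (hlong : ∀ l', G.IsPathSupport l' → l'.length ≤ l.length) (h0 : 0 < l.length) {x : V}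
    (hx : G.Adj l[0] x) : x ∈ l := by
  by_contra hxl
  have hne : l ≠ [] := List.length_pos_iff.1 h0
  have hext : G.IsPathSupport (x :: l) :=
    ⟨hl.isChain.cons_of_ne_nil hne (by rw [List.head_eq_getElem]; exact hx.symm),
      List.nodup_cons.2 ⟨hxl, hl.nodup⟩⟩
  simpa using hlong _ hext

theorem exists_isCycle [DecidableEq V] (hl : G.IsPathSupport l) (h3 : 3 ≤ l.length)
    (hadj : G.Adj l[l.length - 1] l[0]) :
    ∃ (v : V) (c : G.Walk v v), c.IsCycle ∧ c.support.toFinset = l.toFinset := by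
  have hne : l ≠ [] := List.length_pos_iff.1 (by omega)
  let p := Walk.ofSupport l hne hl.isChain
  have hp : p.IsPath := by rw [Walk.isPath_def, Walk.support_ofSupport]; exact hl.nodup
  have hadj' : G.Adj (l.getLast hne) (l.head hne) := by
    rwa [List.head_eq_getElem, List.getLast_eq_getElem]
  refine ⟨_, .cons hadj' p, (Walk.cons_isCycle_iff _ _).2 ⟨hp, fun he => ?_⟩, ?_⟩
  · have := hp.length_eq_one_of_mem_edges (by rwa [Sym2.eq_swap] at he)
    simp [p] at this
    omega
  · simp [p, List.getLast_mem]

end IsPathSupport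

variable (G) in
def HeadNeighborsWithin (m T : ℕ) : Prop :=
  ∀ W : List V, G.IsPathSupport W → W.length = m →
    ∀ (h0 : 0 < W.length) (x : V), G.Adj W[0] x → x ∈ W.take (T + 1)

theorem exists_headNeighborsWithin [Fintype V] [Nonempty V] (hadj : ∀ v, ∃ w, G.Adj v w) :
    ∃ (m T : ℕ) (P : List V), G.HeadNeighborsWithin m T ∧ G.IsPathSupport P ∧ P.length = m ∧
      ∃ hT : T < P.length, G.Adj P[0] P[T] := by
  obtain ⟨v⟩ := ‹Nonempty V›
  obtain ⟨L, hL, hLmax⟩ := Set.exists_max_image_of_forall_le List.length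
    (s := {l | G.IsPathSupport l}) ⟨[v], List.isChain_singleton v, List.nodup_singleton v⟩
    fun l hl => hl.nodup.length_le_card
  have hL0 : 0 < L.length := hLmax [v] ⟨List.isChain_singleton v, List.nodup_singleton v⟩
  obtain ⟨w, hw⟩ := hadj L[0]
  obtain ⟨j, hj, rfl⟩ := List.mem_iff_getElem.1 (hL.mem_of_adj_getElem_zero hLmax hL0 hw)
  obtain ⟨⟨P, T⟩, ⟨hP, hPm, hT, hPT⟩, hTmax⟩ := Set.exists_max_image_of_forall_le Prod.snd
    (s := {p : List V × ℕ | G.IsPathSupport p.1 ∧ p.1.length = L.length ∧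
      ∃ h : p.2 < p.1.length, G.Adj (p.1[0]'(by omega)) p.1[p.2]})
    ⟨(L, j), hL, rfl, hj, hw⟩ fun p hp => hp.2.1 ▸ hp.2.2.1.le
  refine ⟨L.length, T, P, fun W hW hWm h0 x hx => ?_, hP, hPm, hT, hPT⟩
  obtain ⟨i, hi, rfl⟩ := List.mem_iff_getElem.1 (hW.mem_of_adj_getElem_zero (hWm ▸ hLmax) h0 hx)
  have hiT : i ≤ T := hTmax (W, i) ⟨hW, hWm, hi, hx⟩
  exact List.mem_take_iff_getElem.2 ⟨i, lt_min (Nat.lt_succ_of_le hiT) hi, rfl⟩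

variable [DecidableEq V]

variable (G) in
def highDegreeIn [DecidableRel G.Adj] (k : ℕ) (s : Finset V) : Finset V :=
  {u ∈ s | k ≤ #{x ∈ s | G.Adj u x}}

variable (G) in
structure IsPosaPath (m T : ℕ) (C : Finset V) (W : List V) : Prop where
  isPathSupport : G.IsPathSupport W
  length_eq : W.length = m
  toFinset_take : (W.take (T + 1)).toFinset = C

namespace IsPosaPath

variable {m T : ℕ} {C : Finset V} {W : List V}

theorem exists_getElem_eq_of_adj (hfar : G.HeadNeighborsWithin m T) (hW : G.IsPosaPath m T C W)
    (h0 : 0 < W.length) {x : V} (hx : G.Adj W[0] x) :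
    ∃ (j : ℕ) (hj : j < W.length), 1 ≤ j ∧ j ≤ T ∧ W[j] = x := by
  obtain ⟨j, hj, rfl⟩ :=
    List.mem_take_iff_getElem.1 (hfar W hW.isPathSupport hW.length_eq h0 x hx)
  refine ⟨j, by omega, Nat.one_le_iff_ne_zero.2 ?_, by omega, rfl⟩
  rintro rfl
  exact G.irrefl hx

theorem posaRotate (hfar : G.HeadNeighborsWithin m T) (hW : G.IsPosaPath m T C W) {j : ℕ}
    (hj : j < W.length) (hadj : G.Adj W[0] W[j]) : G.IsPosaPath m T C (W.posaRotate j) := by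
  obtain ⟨i, hi, hi1, hiT, hij⟩ := hW.exists_getElem_eq_of_adj hfar (by omega) hadj
  obtain rfl : i = j := hW.isPathSupport.nodup.getElem_inj_iff.1 hij
  refine ⟨hW.isPathSupport.posaRotate hi1 hj hadj, by simp [hW.length_eq], ?_⟩
  rw [List.take_posaRotate _ (by omega), ← hW.toFinset_take]
  exact List.toFinset_eq_of_perm _ _ (List.posaRotate_perm _ _)

variable [Fintype V] [DecidableRel G.Adj] {k : ℕ}

theorem getElem_zero_mem_highDegreeIn (hfar : G.HeadNeighborsWithin m T)
    (hdeg : ∀ v, k ≤ G.degree v) (hW : G.IsPosaPath m T C W) (h0 : 0 < W.length) :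
    W[0] ∈ G.highDegreeIn k C := by
  have hsub : G.neighborFinset W[0] ⊆ {x ∈ C | G.Adj W[0] x} := fun x hx => by
    rw [mem_neighborFinset] at hx
    rw [mem_filter, ← hW.toFinset_take, List.mem_toFinset]
    exact ⟨hfar W hW.isPathSupport hW.length_eq h0 x hx, hx⟩
  refine mem_filter.2 ⟨?_, ?_⟩
  · rw [← hW.toFinset_take, List.mem_toFinset]
    exact List.mem_take_iff_getElem.2 ⟨0, by omega, rfl⟩
  · calc k ≤ G.degree W[0] := hdeg _
      _ = #(G.neighborFinset W[0]) := (card_neighborFinset_eq_degree _ _).symm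
      _ ≤ #{x ∈ C | G.Adj W[0] x} := card_le_card hsub

theorem entryBefore_mem_highDegreeIn (hfar : G.HeadNeighborsWithin m T)
    (hdeg : ∀ v, k ≤ G.degree v) (hW : G.IsPosaPath m T C W) (h0 : 0 < W.length) {x : V}
    (hx : G.Adj W[0] x) : W.entryBefore x ∈ G.highDegreeIn k C := by
  obtain ⟨j, hj, hj1, -, rfl⟩ := hW.exists_getElem_eq_of_adj hfar h0 hx
  rw [hW.isPathSupport.nodup.entryBefore_getElem, ← W.getElem_posaRotate_zero hj1 hj.le]
  exact (hW.posaRotate hfar hj hx).getElem_zero_mem_highDegreeIn hfar hdeg _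

theorem injOn_entryBefore (hfar : G.HeadNeighborsWithin m T) (hW : G.IsPosaPath m T C W)
    (h0 : 0 < W.length) : Set.InjOn W.entryBefore (G.neighborFinset W[0]) := by
  intro x hx y hy hxy
  rw [mem_coe, mem_neighborFinset] at hx hy
  obtain ⟨i, hi, hi1, -, rfl⟩ := hW.exists_getElem_eq_of_adj hfar h0 hx
  obtain ⟨j, hj, hj1, -, rfl⟩ := hW.exists_getElem_eq_of_adj hfar h0 hy
  have hnd := hW.isPathSupport.nodup
  rw [hnd.entryBefore_getElem, hnd.entryBefore_getElem, hnd.getElem_inj_iff] at hxy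
  rw [hnd.getElem_inj_iff]
  omega

theorem image_entryBefore_subset (hfar : G.HeadNeighborsWithin m T)
    (hdeg : ∀ v, k ≤ G.degree v) (hW : G.IsPosaPath m T C W) (h0 : 0 < W.length) :
    (G.neighborFinset W[0]).image W.entryBefore ⊆ G.highDegreeIn k C := by
  intro u hu
  obtain ⟨x, hx, rfl⟩ := mem_image.1 hu
  exact hW.entryBefore_mem_highDegreeIn hfar hdeg h0 ((mem_neighborFinset _ _ _).1 hx)

theorem card_image_entryBefore (hfar : G.HeadNeighborsWithin m T) (hW : G.IsPosaPath m T C W)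
    (h0 : 0 < W.length) : #((G.neighborFinset W[0]).image W.entryBefore) = G.degree W[0] := by
  rw [card_image_of_injOn (hW.injOn_entryBefore hfar h0), card_neighborFinset_eq_degree]

theorem le_card_highDegreeIn (hfar : G.HeadNeighborsWithin m T)
    (hdeg : ∀ v, k ≤ G.degree v) (hW : G.IsPosaPath m T C W) (h0 : 0 < W.length) :
    k ≤ #(G.highDegreeIn k C) :=
  calc k ≤ G.degree W[0] := hdeg _
    _ = #((G.neighborFinset W[0]).image W.entryBefore) :=
      (hW.card_image_entryBefore hfar h0).symm
    _ ≤ #(G.highDegreeIn k C) := card_le_card (hW.image_entryBefore_subset hfar hdeg h0)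

theorem image_entryBefore_eq (hfar : G.HeadNeighborsWithin m T)
    (hdeg : ∀ v, k ≤ G.degree v) (hW : G.IsPosaPath m T C W) (h0 : 0 < W.length)
    (hsmall : #(G.highDegreeIn k C) ≤ k) :
    (G.neighborFinset W[0]).image W.entryBefore = G.highDegreeIn k C :=
  eq_of_subset_of_card_le (hW.image_entryBefore_subset hfar hdeg h0)
    (by rw [hW.card_image_entryBefore hfar h0]; exact hsmall.trans (hdeg _))

theorem adj_getElem_of_mem_highDegreeIn (hfar : G.HeadNeighborsWithin m T)
    (hdeg : ∀ v, k ≤ G.degree v) {P : List V} (hP : G.IsPosaPath m T C P) (hT : T < P.length)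
    (hPT : G.Adj P[0] P[T]) (hsmall : #(G.highDegreeIn k C) ≤ k) {u : V}
    (hu : u ∈ G.highDegreeIn k C) : G.Adj u P[T] := by
  have h0 : 0 < P.length := by omega
  have hnd := hP.isPathSupport.nodup
  have hprev : P[T - 1] ∈ G.highDegreeIn k C :=
    hnd.entryBefore_getElem hT ▸ hP.entryBefore_mem_highDegreeIn hfar hdeg h0 hPT
  rw [← hP.image_entryBefore_eq hfar hdeg h0 hsmall] at hu
  obtain ⟨x, hx, rfl⟩ := mem_image.1 hu
  rw [mem_neighborFinset] at hx
  obtain ⟨j, hj, hj1, hjT, rfl⟩ := hP.exists_getElem_eq_of_adj hfar h0 hx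
  rw [hnd.entryBefore_getElem]
  rcases hjT.eq_or_lt with rfl | hjT
  · simpa [Nat.sub_add_cancel hj1] using hP.isPathSupport.isChain.getElem (j - 1) (by omega)
  · -- In the rotation at `j`, whose head is `u`, the vertex `P[T - 1]` still sits at index
    -- `T - 1`, so it precedes a neighbour of `u`, which can only be `P[T]`.
    have hW := hP.posaRotate hfar hj hx
    have hW0 : 0 < (P.posaRotate j).length := by simp; omega
    rw [← hW.image_entryBefore_eq hfar hdeg hW0 hsmall] at hprev
    obtain ⟨y, hy, hyT⟩ := mem_image.1 hprev
    rw [mem_neighborFinset] at hy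
    obtain ⟨i, hi, hi1, -, rfl⟩ := hW.exists_getElem_eq_of_adj hfar hW0 hy
    have hTW : (P.posaRotate j)[T - 1]'(by simp; omega) = P[T - 1] :=
      P.getElem_posaRotate_of_le (by omega) _
    rw [hW.isPathSupport.nodup.entryBefore_getElem, ← hTW,
      hW.isPathSupport.nodup.getElem_inj_iff] at hyT
    obtain rfl : i = T := by omega
    rwa [← P.getElem_posaRotate_zero hj1 hj.le, ← P.getElem_posaRotate_of_le hjT.le]

theorem lt_card_highDegreeIn (hfar : G.HeadNeighborsWithin m T) (hdeg : ∀ v, k ≤ G.degree v)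
    {P : List V} (hP : G.IsPosaPath m T C P) (hT : T < P.length) (hPT : G.Adj P[0] P[T]) :
    k < #(G.highDegreeIn k C) := by
  by_contra! hsmall
  have h0 : 0 < P.length := by omega
  have hPT_mem : P[T] ∈ G.highDegreeIn k C := by
    refine mem_filter.2 ⟨?_, ?_⟩
    · rw [← hP.toFinset_take, List.mem_toFinset]
      exact List.mem_take_iff_getElem.2 ⟨T, by omega, rfl⟩
    · refine (hP.le_card_highDegreeIn hfar hdeg h0).trans (card_le_card fun u hu => ?_)
      exact mem_filter.2 ⟨(mem_filter.1 hu).1,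
        (hP.adj_getElem_of_mem_highDegreeIn hfar hdeg hT hPT hsmall hu).symm⟩
  rw [← hP.image_entryBefore_eq hfar hdeg h0 hsmall] at hPT_mem
  obtain ⟨x, hx, hxT⟩ := mem_image.1 hPT_mem
  rw [mem_neighborFinset] at hx
  obtain ⟨j, hj, hj1, hjT, rfl⟩ := hP.exists_getElem_eq_of_adj hfar h0 hx
  have hnd := hP.isPathSupport.nodup
  rw [hnd.entryBefore_getElem, hnd.getElem_inj_iff] at hxT
  omega

end IsPosaPath

end SimpleGraph

/-- If `G` has minimum degree at least `k ≥ 2`, then `G` contains a cycle `C` containing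
at least `k+1` vertices each having at least `k` neighbors in `C`. -/
theorem exists_cycle_many_high_degree_vertices {V : Type*} [Fintype V] [DecidableEq V] [Nonempty V]
    (G : SimpleGraph V) [DecidableRel G.Adj]
    (k : ℕ) (hk : 2 ≤ k) (hdeg : ∀ v : V, k ≤ G.degree v) :
    ∃ (v : V) (C : G.Walk v v), C.IsCycle ∧
      k + 1 ≤ (C.support.toFinset.filter
        (fun u => k ≤ (C.support.toFinset.filter (fun x => G.Adj u x)).card)).card := by
  obtain ⟨m, T, P, hfar, hP, hPm, hT, hPT⟩ := G.exists_headNeighborsWithin fun v =>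
    (G.degree_pos_iff_exists_adj v).1 (by linarith [hdeg v])
  have hPosa : G.IsPosaPath m T (P.take (T + 1)).toFinset P := ⟨hP, hPm, rfl⟩
  have hcard := hPosa.lt_card_highDegreeIn hfar hdeg hT hPT
  have hT2 : 2 ≤ T := by
    have : #(G.highDegreeIn k (P.take (T + 1)).toFinset) ≤ T + 1 :=
      (card_filter_le _ _).trans ((List.toFinset_card_le _).trans (List.length_take_le _ _))
    omega
  obtain ⟨v, c, hc, hsupp⟩ := (hP.take (T + 1)).exists_isCycle (by simp; omega)
    (by simpa [Nat.min_eq_left hT] using hPT.symm)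
  refine ⟨v, c, hc, ?_⟩
  rw [hsupp]
  exact hcard
end

section
/- If a cycle C in a graph contains at least k+1 vertices each having at least k neighbors among the vertices of C, then C has at least (k+1)(k-2)/2 chords. -/
open scoped Classical in
/-- The set of chords of a cycle `C` in `G`: edges of `G` joining two vertices of `C`
that are not edges of `C`. -/
noncomputable def chordFinset {V : Type*} [Fintype V] (G : SimpleGraph V)
    {v : V} (C : G.Walk v v) : Finset (Sym2 V) :=
  G.edgeFinset.filter (fun e => e ∉ C.edges ∧ ∀ x ∈ e, x ∈ C.support)

/-!
A vertex of the cycle with at least `k` neighbours on it is joined to at most two of them by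
edges of the cycle, so it lies on at least `k - 2` chords. Counting pairs (vertex, chord through
it) over `k + 1` such vertices gives at least `(k + 1)(k - 2)` pairs, while each chord has only
two endpoints.
-/

open Finset

lemma Sym2.card_filter_mem_le_two {α : Type*} [DecidableEq α] (s : Finset α) (z : Sym2 α) :
    #{a ∈ s | a ∈ z} ≤ 2 :=
  calc #{a ∈ s | a ∈ z} ≤ #z.toFinset :=
        card_le_card fun a ha => Sym2.mem_toFinset.mpr (mem_filter.mp ha).2
    _ ≤ 2 := by rw [Sym2.card_toFinset]; split <;> omega

namespace SimpleGraph.Walk.IsCycle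

variable {V : Type*} {G : SimpleGraph V} {v x : V} {C : G.Walk v v}

lemma card_filter_mk_mem_edges_le_two [DecidableEq V] (hC : C.IsCycle) (hx : x ∈ C.support)
    (s : Finset V) : #{y ∈ s | s(x, y) ∈ C.edges} ≤ 2 := by
  rw [← hC.ncard_neighborSet_toSubgraph_eq_two hx, ← Set.ncard_coe_finset]
  refine Set.ncard_le_ncard (fun y hy => ?_) C.finite_neighborSet_toSubgraph
  exact adj_toSubgraph_iff_mem_edges.mpr (mem_filter.mp hy).2

lemma card_neighbors_le_card_chords_add_two [Fintype V] [DecidableEq V] [DecidableRel G.Adj]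
    (hC : C.IsCycle) (hx : x ∈ C.support) :
    #{y ∈ C.support.toFinset | G.Adj x y} ≤ #{e ∈ chordFinset G C | x ∈ e} + 2 := by
  set N := {y ∈ C.support.toFinset | G.Adj x y}
  have hoff : #{y ∈ N | s(x, y) ∉ C.edges} ≤ #{e ∈ chordFinset G C | x ∈ e} := by
    refine card_le_card_of_injOn (fun y => s(x, y)) (fun y hy => ?_)
      (fun y _ z _ h => Sym2.congr_right.mp h)
    obtain ⟨⟨hyC, hadj⟩, hnot⟩ : (y ∈ C.support.toFinset ∧ G.Adj x y) ∧ s(x, y) ∉ C.edges := by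
      simpa [N] using hy
    simp only [mem_coe, mem_filter, chordFinset, mem_edgeFinset]
    refine ⟨⟨hadj, hnot, fun z hz => ?_⟩, Sym2.mem_mk_left x y⟩
    rcases Sym2.mem_iff.mp hz with rfl | rfl
    exacts [hx, List.mem_toFinset.mp hyC]
  have hon := hC.card_filter_mk_mem_edges_le_two hx N
  have := card_filter_add_card_filter_not (s := N) (fun y => s(x, y) ∈ C.edges)
  omega

end SimpleGraph.Walk.IsCycle

theorem cycle_with_high_degree_vertices_many_chords_general {V : Type*} [Fintype V] [DecidableEq V]
    (G : SimpleGraph V) [DecidableRel G.Adj]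
    (k : ℕ) {v : V} (C : G.Walk v v) (hC : C.IsCycle)
    (hmany : k + 1 ≤ (C.support.toFinset.filter
      (fun u => k ≤ (C.support.toFinset.filter (fun x => G.Adj u x)).card)).card) :
    (k + 1) * (k - 2) / 2 ≤ (chordFinset G C).card := by
  set S := C.support.toFinset.filter
    (fun u => k ≤ (C.support.toFinset.filter (fun x => G.Adj u x)).card)
  have hchords : ∀ u ∈ S, k - 2 ≤ #{e ∈ chordFinset G C | u ∈ e} := by
    intro u hu
    obtain ⟨huC, hdeg⟩ := mem_filter.mp hu
    have := hC.card_neighbors_le_card_chords_add_two (List.mem_toFinset.mp huC)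
    omega
  have hcount : #S * (k - 2) ≤ #(chordFinset G C) * 2 :=
    card_mul_le_card_mul _ hchords fun e _ => Sym2.card_filter_mem_le_two S e
  exact Nat.div_le_of_le_mul (by linarith [Nat.mul_le_mul_right (k - 2) hmany])

/-- If a cycle `C` contains at least `k+1` vertices each having at least `k` neighbors
among the vertices of `C`, then `C` has at least `(k+1)(k-2)/2` chords. -/
theorem cycle_with_high_degree_vertices_many_chords {V : Type*} [Fintype V] [DecidableEq V]
    (G : SimpleGraph V) [DecidableRel G.Adj]
    (k : ℕ) (hk : 2 ≤ k) {v : V} (C : G.Walk v v) (hC : C.IsCycle)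
    (hmany : k + 1 ≤ (C.support.toFinset.filter
      (fun u => k ≤ (C.support.toFinset.filter (fun x => G.Adj u x)).card)).card) :
    (k + 1) * (k - 2) / 2 ≤ (chordFinset G C).card :=
  cycle_with_high_degree_vertices_many_chords_general G k C hC hmany
end

section
/- There exist infinitely many pairs of integers (a, b) with a, b ≥ 3 such that a(a-3)/2 = b² - 2b. -/
private def chordSeq : ℕ → ℕ × ℕ
  | 0 => (10, 7)
  | n+1 => ((chordSeq n).1 * 3 + (chordSeq n).2 * 4 - 7,
            (chordSeq n).1 * 2 + (chordSeq n).2 * 3 - 5)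

private lemma chordSeq_inv (n : ℕ) : 10 ≤ (chordSeq n).1 ∧ 7 ≤ (chordSeq n).2 ∧
    ((chordSeq n).1 : ℤ) * ((chordSeq n).1 - 3)
      = 2 * (((chordSeq n).2 : ℤ) ^ 2 - 2 * (chordSeq n).2) := by
  induction n with
  | zero => norm_num [chordSeq]
  | succ n ih =>
    obtain ⟨ha, hb, heq⟩ := ih
    set a := (chordSeq n).1 with hA
    set b := (chordSeq n).2 with hB
    have h1 : (chordSeq (n+1)).1 = a * 3 + b * 4 - 7 := by rw [chordSeq]
    have h2 : (chordSeq (n+1)).2 = a * 2 + b * 3 - 5 := by rw [chordSeq]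
    refine ⟨by omega, by omega, ?_⟩
    have c1 : ((chordSeq (n+1)).1 : ℤ) = a * 3 + b * 4 - 7 := by
      rw [h1]; push_cast [Nat.cast_sub (by omega : 7 ≤ a * 3 + b * 4)]; ring
    have c2 : ((chordSeq (n+1)).2 : ℤ) = a * 2 + b * 3 - 5 := by
      rw [h2]; push_cast [Nat.cast_sub (by omega : 5 ≤ a * 2 + b * 3)]; ring
    rw [c1, c2]
    nlinarith [heq]

private lemma chordSeq_fst_mono : StrictMono (fun n => (chordSeq n).1) := by
  apply strictMono_nat_of_lt_succ
  intro n
  obtain ⟨ha, hb, -⟩ := chordSeq_inv n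
  show (chordSeq n).1 < (chordSeq (n+1)).1
  rw [chordSeq]
  omega

/-- There are infinitely many pairs of integers `(a, b)` with `a, b ≥ 3` such that
`a(a-3)/2 = b² - 2b`. -/
theorem infinitely_many_common_chord_counts :
    {p : ℕ × ℕ | 3 ≤ p.1 ∧ 3 ≤ p.2 ∧ p.1 * (p.1 - 3) / 2 = p.2 ^ 2 - 2 * p.2}.Infinite := by
  apply Set.infinite_of_injective_forall_mem (f := chordSeq)
  · have : Function.Injective (fun n => (chordSeq n).1) := chordSeq_fst_mono.injective
    intro m n h
    exact this (by simp [h])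
  · intro n
    obtain ⟨ha, hb, heq⟩ := chordSeq_inv n
    refine ⟨by omega, by omega, ?_⟩
    set a := (chordSeq n).1
    set b := (chordSeq n).2
    have hnat : a * (a - 3) = 2 * (b ^ 2 - 2 * b) := by
      zify [show 3 ≤ a by omega, show 2 * b ≤ b ^ 2 by nlinarith]
      linarith [heq]
    rw [hnat, Nat.mul_div_cancel_left _ (by norm_num)]
end

section
/- If a graph F has minimum degree at least 3 and has a Hamiltonian cycle C, then K₄ can be obtained from F by contracting edges of C (i.e., F has a cyclic K₄-minor witnessed by C). -/
/-!
Rotate the cycle so that a shortest chord, of length `g`, starts at its first vertex `x₀`. The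
second vertex `x₁` also has a chord; by minimality it lands at least `g` steps after `x₁`, so
the two chords cross. Two crossing chords `x₀x_c`, `x_bx_d` with `0 < b < c < d` cut the cycle
into four arcs `[0, b)`, `[b, c)`, `[c, d)`, `[d, n)`: consecutive arcs are joined by cycle
edges and the two pairs of opposite arcs by the chords, so contracting the arcs gives `K₄`.
-/

open List SimpleGraph

namespace List

variable {α : Type*} {r : α → α → Prop} {l : List α}

theorem isChain_of_cycle_chain (h : Cycle.Chain r (l : Cycle α)) : l.IsChain r := by
  match l, h with
  | [], _ => exact .nil
  | a :: t, h => exact (isChain_append.1 ((Cycle.chain_coe_cons r a t).1 h)).1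

theorem rel_getElem_last_getElem_zero_of_cycle_chain (h : Cycle.Chain r (l : Cycle α))
    (hl : 0 < l.length) : r l[l.length - 1] l[0] := by
  match l, h with
  | a :: t, h =>
    have := ((Cycle.chain_coe_cons r a t).1 h).getElem t.length (by simp)
    rcases eq_or_ne t [] with rfl | ht
    · simpa using this
    · simpa [getElem_cons, getElem_append, ht, Nat.sub_lt, length_pos_iff] using this

theorem getElem_rotate_one_of_lt {k : ℕ} (hk : k + 1 < l.length) :
    (l.rotate 1)[k]'(by simp; omega) = l[k + 1] := by
  simp [Nat.mod_eq_of_lt hk]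

end List

def arcIndex (b c d t : ℕ) : Fin 4 :=
  if t < b then 0 else if t < c then 1 else if t < d then 2 else 3

section arcIndex

variable {α : Type*} {b c d t : ℕ}

theorem arcIndex_monotone (b c d : ℕ) : Monotone (arcIndex b c d) := by
  intro s t hst
  simp only [arcIndex]
  split_ifs <;> first | decide | omega

theorem arcIndex_eq_zero (ht : t < b) : arcIndex b c d t = 0 := by simp [arcIndex, ht]

theorem arcIndex_eq_one (hbt : b ≤ t) (htc : t < c) : arcIndex b c d t = 1 := by
  simp [arcIndex, not_lt.2 hbt, htc]

theorem arcIndex_eq_two (hbc : b ≤ c) (hct : c ≤ t) (htd : t < d) : arcIndex b c d t = 2 := by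
  simp [arcIndex, not_lt.2 hct, not_lt.2 (hbc.trans hct), htd]

theorem arcIndex_eq_three (hbc : b ≤ c) (hcd : c ≤ d) (hdt : d ≤ t) :
    arcIndex b c d t = 3 := by
  simp [arcIndex, not_lt.2 hdt, not_lt.2 (hcd.trans hdt), not_lt.2 ((hbc.trans hcd).trans hdt)]

theorem isChain_map_arcIndex_idxOf [DecidableEq α] {L : List α} (hnodup : L.Nodup) (b c d : ℕ) :
    (L.map fun x => arcIndex b c d (L.idxOf x)).IsChain (· ≤ ·) := by
  rw [isChain_iff_getElem]
  intro t ht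
  simp only [length_map] at ht
  simp only [getElem_map, hnodup.idxOf_getElem]
  exact arcIndex_monotone b c d t.le_succ

end arcIndex

namespace SimpleGraph

variable {V : Type*} {F : SimpleGraph V}

theorem Walk.cycle_chain_support_tail {v : V} (p : F.Walk v v) :
    Cycle.Chain F.Adj (p.support.tail : Cycle V) := by
  cases p with
  | nil => exact Cycle.Chain.nil _
  | cons h q =>
    have hq : q.support = q.support.dropLast ++ [v] := by
      conv_lhs => rw [← dropLast_append_getLast q.support_ne_nil]
      rw [q.getLast_support]
    have hc := (cons h q).isChain_adj_support
    rw [support_cons, hq] at hc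
    rw [support_cons, List.tail_cons, hq, Cycle.coe_eq_coe.2 (isRotated_concat _ _),
      Cycle.chain_coe_cons]
    exact hc

theorem exists_adj_ne_ne_of_three_le_degree [Fintype V] [DecidableRel F.Adj] {x : V}
    (hx : 3 ≤ F.degree x) (a b : V) : ∃ w, F.Adj x w ∧ w ≠ a ∧ w ≠ b := by
  classical
  have hcard : ({a, b} : Finset V).card < (F.neighborFinset x).card := by
    rw [card_neighborFinset_eq_degree]
    exact Finset.card_le_two.trans_lt hx
  obtain ⟨w, hw, hwab⟩ := Finset.exists_mem_notMem_of_card_lt_card hcard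
  simp only [Finset.mem_insert, Finset.mem_singleton, not_or] at hwab
  exact ⟨w, (F.mem_neighborFinset x w).1 hw, hwab⟩

def HasHeadChord (F : SimpleGraph V) (L : List V) (t : ℕ) : Prop :=
  ∃ _ : t + 2 ≤ L.length, 2 ≤ t ∧ F.Adj L[0] L[t]

/-- Two crossing chords of the cycle `L`, rotated so that one of them starts at `L[0]`. -/
def HasCrossingChords (F : SimpleGraph V) (L : List V) : Prop :=
  ∃ b c d, ∃ (_ : 0 < b) (_ : b < c) (_ : c < d) (_ : d < L.length),
    F.Adj L[0] L[c] ∧ F.Adj L[b] L[d]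

section Chords

variable [Fintype V] [DecidableRel F.Adj] {L : List V}

theorem exists_hasHeadChord (hmem : ∀ x, x ∈ L) (hL : 2 ≤ L.length)
    (hdeg : 3 ≤ F.degree L[0]) : ∃ t, F.HasHeadChord L t := by
  obtain ⟨w, hw, hw1, hwlast⟩ := exists_adj_ne_ne_of_three_le_degree hdeg L[1] L[L.length - 1]
  obtain ⟨t, ht, rfl⟩ := getElem_of_mem (hmem w)
  have ht0 : t ≠ 0 := fun h => hw.ne (by simp [h])
  have ht1 : t ≠ 1 := fun h => hw1 (by simp [h])
  have htlast : t ≠ L.length - 1 := fun h => hwlast (by simp [h])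
  exact ⟨t, by omega, by omega, hw⟩

theorem exists_isRotated_hasCrossingChords (hmem : ∀ x, x ∈ L) (hL : 2 ≤ L.length)
    (hdeg : ∀ x, 3 ≤ F.degree x) : ∃ L', L ~r L' ∧ F.HasCrossingChords L' := by
  have hchord : ∀ L', L ~r L' → ∃ t, F.HasHeadChord L' t := fun L' hL' =>
    exists_hasHeadChord (fun x => hL'.mem_iff.1 (hmem x)) (hL'.perm.length_eq ▸ hL) (hdeg _)
  have hex : ∃ g L', L ~r L' ∧ F.HasHeadChord L' g :=
    let ⟨t, ht⟩ := hchord L (IsRotated.refl L)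
    ⟨t, L, IsRotated.refl L, ht⟩
  classical
  obtain ⟨L', hL', hgL, hg, hshortest⟩ := Nat.find_spec hex
  have hL'' : L ~r L'.rotate 1 := hL'.trans ⟨1, rfl⟩
  obtain ⟨t, htL, ht, hnext⟩ := hchord _ hL''
  have hgt : Nat.find hex ≤ t := Nat.find_min' hex ⟨_, hL'', htL, ht, hnext⟩
  simp only [length_rotate] at htL
  rw [getElem_rotate_one_of_lt (by omega), getElem_rotate_one_of_lt (by omega)] at hnext
  exact ⟨L', hL', 1, Nat.find hex, t + 1, one_pos, by omega, by omega, by omega, hshortest,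
    hnext⟩

end Chords

theorem HasCrossingChords.exists_contraction_K4 {L : List V} (h : F.HasCrossingChords L)
    (hnodup : L.Nodup) (hcyc : Cycle.Chain F.Adj (L : Cycle V)) :
    ∃ f : V → Fin 4, Function.Surjective f ∧ (L.map f).IsChain (· ≤ ·) ∧
      ∀ i j : Fin 4, i ≠ j → ∃ u w, f u = i ∧ f w = j ∧ F.Adj u w := by
  classical
  obtain ⟨b, c, d, hb, hbc, hcd, hd, hac, hbd⟩ := h
  set n := L.length
  let f : V → Fin 4 := fun x => arcIndex b c d (L.idxOf x)
  have hf : ∀ t (ht : t < n), f L[t] = arcIndex b c d t := fun t ht => by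
    simp only [f, hnodup.idxOf_getElem]
  have hstep : ∀ t (ht : t < n), 0 < t → F.Adj L[t - 1] L[t] := fun t ht ht0 => by
    simpa [Nat.sub_add_cancel ht0] using
      (isChain_of_cycle_chain hcyc).getElem (t - 1) (by omega)
  have hwrap : F.Adj L[n - 1] L[0] := rel_getElem_last_getElem_zero_of_cycle_chain hcyc (by omega)
  let R (i j : Fin 4) : Prop := ∃ u w, f u = i ∧ f w = j ∧ F.Adj u w
  have R_symm : ∀ {i j}, R i j → R j i := fun ⟨u, w, hu, hw, h⟩ =>
    ⟨w, u, hw, hu, h.symm⟩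
  have edge : ∀ s t i j (hs : s < n) (ht : t < n),
      arcIndex b c d s = i → arcIndex b c d t = j → F.Adj L[s] L[t] → R i j :=
    fun s t i j hs ht hi hj h => ⟨_, _, (hf s hs).trans hi, (hf t ht).trans hj, h⟩
  have h0 : arcIndex b c d 0 = 0 := arcIndex_eq_zero hb
  have hb1 : arcIndex b c d b = 1 := arcIndex_eq_one le_rfl hbc
  have hc2 : arcIndex b c d c = 2 := arcIndex_eq_two hbc.le le_rfl hcd
  have hd3 : arcIndex b c d d = 3 := arcIndex_eq_three hbc.le hcd.le le_rfl
  have r01 : R 0 1 := edge (b - 1) b 0 1 (by omega) (by omega) (arcIndex_eq_zero (by omega)) hb1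
    (hstep b (by omega) hb)
  have r12 : R 1 2 := edge (c - 1) c 1 2 (by omega) (by omega)
    (arcIndex_eq_one (by omega) (by omega)) hc2 (hstep c (by omega) (by omega))
  have r23 : R 2 3 := edge (d - 1) d 2 3 (by omega) hd
    (arcIndex_eq_two hbc.le (by omega) (by omega)) hd3 (hstep d hd (by omega))
  have r03 : R 0 3 := edge 0 (n - 1) 0 3 (by omega) (by omega) h0
    (arcIndex_eq_three hbc.le hcd.le (by omega)) hwrap.symm
  have r02 : R 0 2 := edge 0 c 0 2 (by omega) (by omega) h0 hc2 hac
  have r13 : R 1 3 := edge b d 1 3 (by omega) hd hb1 hd3 hbd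
  refine ⟨f, ?_, ?_, ?_⟩
  · intro i
    fin_cases i
    exacts [⟨L[0], (hf 0 _).trans h0⟩, ⟨L[b], (hf b _).trans hb1⟩,
      ⟨L[c], (hf c _).trans hc2⟩, ⟨L[d], (hf d hd).trans hd3⟩]
  · exact isChain_map_arcIndex_idxOf hnodup b c d
  · intro i j hij
    fin_cases i <;> fin_cases j
    all_goals first | exact absurd rfl hij | assumption | exact R_symm ‹_›

end SimpleGraph

/-- If `F` has minimum degree at least 3 and a Hamiltonian cycle `C`, then `K₄` can be
obtained from `F` by contracting edges of `C`: there is a partition of `V(F)` into 4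
classes (fibers of `f`), each inducing a subpath of `C` (the classes appear as
consecutive blocks along a rotation of the cyclic order of `C`), such that any two
distinct classes are joined by an edge of `F`. -/
theorem cyclic_K4_minor {V : Type*} [Fintype V] [DecidableEq V] (F : SimpleGraph V) [DecidableRel F.Adj]
    (hdeg : ∀ v : V, 3 ≤ F.degree v)
    {v : V} (C : F.Walk v v) (hC : C.IsHamiltonianCycle) :
    ∃ (f : V → Fin 4) (r : ℕ),
      Function.Surjective f ∧
      List.Chain' (· ≤ ·) ((C.support.tail.rotate r).map f) ∧
      (∀ i j : Fin 4, i ≠ j → ∃ u w : V, f u = i ∧ f w = j ∧ F.Adj u w) := by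
  have hmem : ∀ x, x ∈ C.support.tail := fun x => by
    simpa [C.support_tail_of_not_nil hC.isCycle.not_nil] using hC.isHamiltonian_tail.mem_support x
  have hlen : 4 ≤ C.support.tail.length := by
    rw [length_tail, C.length_support, hC.length_eq, Nat.add_sub_cancel]
    exact (hdeg v).trans_lt (F.degree_lt_card_verts v)
  obtain ⟨L, ⟨r, rfl⟩, hcross⟩ := exists_isRotated_hasCrossingChords hmem (by omega) hdeg
  obtain ⟨f, hsurj, hchain, hK4⟩ :=
    hcross.exists_contraction_K4 (nodup_rotate.2 hC.support_nodup)
    (by rw [Cycle.coe_eq_coe.2 (IsRotated.forall _ r)]; exact C.cycle_chain_support_tail)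
  exact ⟨f, r, hsurj, hchain, hK4⟩
end

section
/- Let F be a graph with Hamiltonian cycle C such that every edge e of C is contained in at least three triangles of F. Then K₅ can be obtained from F by contracting edges of C. -/
/-!
Write the Hamiltonian cycle as a periodic sequence `e 0, e 1, …` of period `n`. Call a common
neighbour `e (k + 1 + a)` of a cycle edge `e k e (k + 1)` with `2 ≤ a ≤ n - 3` a chord apex of
that edge. Of the at least three common neighbours of the edge at most two, `e (k + 2)` and
`e (k - 1)`, are not chord apexes; so every edge has a chord apex, and either it has two of them
or `e (k - 1)` is adjacent to `e (k + 1)`.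

Take a chord apex with the least offset `g`, say on the edge `e k e (k + 1)`, and number the
cycle from `e (k + 1)` as position `0`, so that `0` and `n - 1` are both adjacent to `g`. The
next edge `0 1` has a chord apex `a + 1` with `a ≥ g` by minimality, and `1` is adjacent to some
`q ≥ a + 2` (the second apex, or `n - 1`). Then the five intervals `{0}`, `[1, g)`, `[g, a]`,
`{a + 1}`, `[a + 2, n)` of the cycle are pairwise joined by edges.
-/

open Finset Function

namespace SimpleGraph.Walk

variable {V : Type*} {G : SimpleGraph V} {u : V}

lemma getVert_mod_length (p : G.Walk u u) {i : ℕ} (hi : i ≤ p.length) :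
    p.getVert (i % p.length) = p.getVert i := by
  rcases hi.lt_or_eq with hi | rfl
  · rw [Nat.mod_eq_of_lt hi]
  · rw [Nat.mod_self, getVert_zero, getVert_length]

lemma getVert_succ_mod_length (p : G.Walk u u) (hp : 0 < p.length) (k : ℕ) :
    p.getVert ((k + 1) % p.length) = p.getVert (k % p.length + 1) := by
  rw [← Nat.mod_add_mod, getVert_mod_length p (Nat.mod_lt k hp)]

lemma mk_getVert_mod_length_mem_edges (p : G.Walk u u) (hp : 0 < p.length) (k : ℕ) :
    s(p.getVert (k % p.length), p.getVert ((k + 1) % p.length)) ∈ p.edges := by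
  rw [getVert_succ_mod_length p hp, mk_mem_edges_iff_exists]
  exact ⟨k % p.length, Nat.mod_lt k hp, rfl⟩

lemma getElem_support_tail_rotate (p : G.Walk u u) (hp : 0 < p.length) (r : ℕ) {i : ℕ}
    (hi : i < (p.support.tail.rotate r).length) :
    (p.support.tail.rotate r)[i] = p.getVert ((r + 1 + i) % p.length) := by
  simp only [List.getElem_rotate, List.getElem_tail, support_getElem_eq_getVert, List.length_tail,
    length_support, Nat.add_sub_cancel]
  rw [Nat.add_right_comm r 1 i, getVert_succ_mod_length p hp, Nat.add_comm i r]

lemma IsHamiltonianCycle.surjective_getVert_mod_length [DecidableEq V] {p : G.Walk u u}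
    (hp : p.IsHamiltonianCycle) : Surjective fun k => p.getVert (k % p.length) := by
  intro x
  obtain ⟨i, rfl, hi⟩ := mem_support_iff_exists_getVert.1 (hp.mem_support x)
  exact ⟨i, p.getVert_mod_length hi⟩

end SimpleGraph.Walk

lemma Function.Periodic.exists_lt_apply_add_eq {α : Type*} {e : ℕ → α} {n : ℕ}
    (he : Periodic e n) (hn : 0 < n) (hsurj : Surjective e) (s : ℕ) (x : α) :
    ∃ a < n, e (s + a) = x := by
  obtain ⟨m, rfl⟩ := hsurj x
  refine ⟨(m + n * s - s) % n, Nat.mod_lt _ hn, ?_⟩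
  have hs : s ≤ n * s := Nat.le_mul_of_pos_left s hn
  rw [← he.map_mod_nat, Nat.add_mod_mod, Nat.add_sub_of_le (by omega), Nat.add_mul_mod_self_left,
    he.map_mod_nat]

def blockOfCuts (c₁ c₂ c₃ c₄ p : ℕ) : Fin 5 :=
  if p < c₁ then 0 else if p < c₂ then 1 else if p < c₃ then 2 else if p < c₄ then 3 else 4

lemma blockOfCuts_mono (c₁ c₂ c₃ c₄ : ℕ) : Monotone (blockOfCuts c₁ c₂ c₃ c₄) := by
  intro p q hpq
  unfold blockOfCuts
  split_ifs <;> first | decide | omega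

def BlocksPairwiseAdj (H : SimpleGraph ℕ) (n : ℕ) (cls : ℕ → Fin 5) : Prop :=
  ∀ i j, i ≠ j → ∃ p q, H.Adj p q ∧ p < n ∧ q < n ∧ cls p = i ∧ cls q = j

lemma blocksPairwiseAdj_blockOfCuts (H : SimpleGraph ℕ) {n g a q : ℕ}
    (hpath : ∀ p, p + 1 < n → H.Adj p (p + 1)) (hwrap : H.Adj 0 (n - 1)) (h0g : H.Adj 0 g)
    (hgn : H.Adj g (n - 1)) (h0a : H.Adj 0 (a + 1)) (h1a : H.Adj 1 (a + 1)) (h1q : H.Adj 1 q)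
    (hg : 2 ≤ g) (hga : g ≤ a) (haq : a + 2 ≤ q) (hqn : q < n) :
    BlocksPairwiseAdj H n (blockOfCuts 1 g (a + 1) (a + 2)) := by
  intro i j hij
  wlog hlt : i < j generalizing i j
  · obtain ⟨p, r, hpr, hp, hr, hpi, hrj⟩ := this j i hij.symm (hij.symm.lt_of_le (not_lt.1 hlt))
    exact ⟨r, p, hpr.symm, hr, hp, hrj, hpi⟩
  fin_cases i <;> fin_cases j <;> (try exact absurd hlt (by decide))
  -- the ten pairs `i < j`, in lexicographic order
  exacts [⟨0, 1, hpath 0 (by omega), by grind [blockOfCuts]⟩,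
    ⟨0, g, h0g, by grind [blockOfCuts]⟩,
    ⟨0, a + 1, h0a, by grind [blockOfCuts]⟩,
    ⟨0, n - 1, hwrap, by grind [blockOfCuts]⟩,
    ⟨g - 1, g, by convert hpath (g - 1) (by omega) using 1; omega, by grind [blockOfCuts]⟩,
    ⟨1, a + 1, h1a, by grind [blockOfCuts]⟩,
    ⟨1, q, h1q, by grind [blockOfCuts]⟩,
    ⟨a, a + 1, hpath a (by omega), by grind [blockOfCuts]⟩,
    ⟨g, n - 1, hgn, by grind [blockOfCuts]⟩,
    ⟨a + 1, a + 2, hpath (a + 1) (by omega), by grind [blockOfCuts]⟩]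

section CyclicSequence

variable {V : Type*} {F : SimpleGraph V} {e : ℕ → V} {n : ℕ}

/-- The bounds on `a` say that the apex `e (k + 1 + a)` is none of `e (k - 1), …, e (k + 2)`. -/
def IsChordApex (F : SimpleGraph V) (e : ℕ → V) (n k a : ℕ) : Prop :=
  2 ≤ a ∧ a + 3 ≤ n ∧ F.Adj (e k) (e (k + 1 + a)) ∧ F.Adj (e (k + 1)) (e (k + 1 + a))

lemma exists_isChordApex_of_adj (hn : 0 < n) (he : Periodic e n) (hsurj : Surjective e)
    {k : ℕ} {z : V} (hz₀ : F.Adj (e k) z) (hz₁ : F.Adj (e (k + 1)) z) (hz₂ : z ≠ e (k + 2))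
    (hz₃ : z ≠ e (k + n - 1)) :
    ∃ a, IsChordApex F e n k a ∧ e (k + 1 + a) = z := by
  obtain ⟨a, ha, rfl⟩ := he.exists_lt_apply_add_eq hn hsurj (k + 1) z
  refine ⟨a, ⟨?_, ?_, hz₀, hz₁⟩, rfl⟩
  · by_contra! h
    interval_cases a
    · exact hz₁.ne rfl
    · exact hz₂ rfl
  · by_contra! h
    obtain rfl | ⟨rfl, h2⟩ : a = n - 1 ∨ (a = n - 2 ∧ 2 ≤ n) := by omega
    · apply hz₀.ne
      rw [show k + 1 + (n - 1) = k + n by omega, he]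
    · exact hz₃ (by rw [show k + 1 + (n - 2) = k + n - 1 by omega])

lemma exists_isChordApex_and_adj [Fintype V] [DecidableEq V] [DecidableRel F.Adj] (hn : 0 < n)
    (he : Periodic e n) (hsurj : Surjective e)
    (htri : ∀ k, 3 ≤ (univ.filter fun z => F.Adj (e k) z ∧ F.Adj (e (k + 1)) z).card) (k : ℕ) :
    ∃ a, IsChordApex F e n k a ∧ ∃ q, a + 2 ≤ q ∧ q < n ∧ F.Adj (e (k + 1)) (e (k + q)) := by
  set T := univ.filter fun z => F.Adj (e k) z ∧ F.Adj (e (k + 1)) z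
  set T' := T \ {e (k + n - 1), e (k + 2)}
  have apex : ∀ z ∈ T', ∃ a, IsChordApex F e n k a ∧ e (k + 1 + a) = z := by
    intro z hz
    simp only [T', T, mem_sdiff, mem_filter, mem_insert, mem_singleton, not_or] at hz
    exact exists_isChordApex_of_adj hn he hsurj hz.1.2.1 hz.1.2.2 hz.2.2 hz.2.1
  have hT : 3 ≤ T.card := htri k
  have hTT' : T.card ≤ T'.card + 2 :=
    card_le_card_sdiff_add_card.trans (by gcongr; exact card_le_two)
  by_cases hT' : 2 ≤ T'.card
  · obtain ⟨z, hz, z', hz', hne⟩ := one_lt_card.1 hT'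
    obtain ⟨a, ha, rfl⟩ := apex z hz
    obtain ⟨a', ha', rfl⟩ := apex z' hz'
    have two_apexes : ∀ a a', IsChordApex F e n k a → IsChordApex F e n k a' → a < a' →
        ∃ a, IsChordApex F e n k a ∧ ∃ q, a + 2 ≤ q ∧ q < n ∧ F.Adj (e (k + 1)) (e (k + q)) := by
      rintro a a' ha ⟨-, ha'n, -, ha'⟩ h
      exact ⟨a, ha, a' + 1, by omega, by omega, by rwa [← Nat.add_assoc, Nat.add_right_comm]⟩
    rcases lt_or_gt_of_ne (fun h => hne (h ▸ rfl) : a ≠ a') with h | h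
    exacts [two_apexes a a' ha ha' h, two_apexes a' a ha' ha h]
  · obtain ⟨z, hz⟩ : T'.Nonempty := card_pos.1 (by omega)
    obtain ⟨a, ha, -⟩ := apex z hz
    have hprev : e (k + n - 1) ∈ T := by
      by_contra hprev
      have : T' = T \ {e (k + 2)} := sdiff_insert_of_notMem hprev _
      have : T.card ≤ T'.card + 1 := by
        simpa [this] using card_le_card_sdiff_add_card (s := T) (t := {e (k + 2)})
      omega
    refine ⟨a, ha, n - 1, by have := ha.2.1; omega, by omega, ?_⟩
    rw [show k + (n - 1) = k + n - 1 by omega]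
    exact (mem_filter.1 hprev).2.2

lemma exists_blocksPairwiseAdj [Fintype V] [DecidableEq V] [DecidableRel F.Adj] (hn : 0 < n)
    (he : Periodic e n) (hsurj : Surjective e) (hadj : ∀ k, F.Adj (e k) (e (k + 1)))
    (htri : ∀ k, 3 ≤ (univ.filter fun z => F.Adj (e k) z ∧ F.Adj (e (k + 1)) z).card) :
    ∃ k, ∃ cls : ℕ → Fin 5, Monotone cls ∧
      BlocksPairwiseAdj (F.comap fun p => e (k + 1 + p)) n cls := by
  classical
  have hex : ∃ g k, IsChordApex F e n k g :=
    let ⟨a, ha, _⟩ := exists_isChordApex_and_adj hn he hsurj htri 0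
    ⟨a, 0, ha⟩
  obtain ⟨k, hg2, -, hkg, hk1g⟩ := Nat.find_spec hex
  obtain ⟨a, ha, q, haq, hqn, h1q⟩ := exists_isChordApex_and_adj hn he hsurj htri (k + 1)
  have hprev : e (k + 1 + (n - 1)) = e k := by rw [show k + 1 + (n - 1) = k + n by omega, he]
  refine ⟨k, _, blockOfCuts_mono _ _ _ _,
    blocksPairwiseAdj_blockOfCuts _ (fun p _ => hadj _) ?_ hk1g ?_ ?_ ?_ h1q hg2
      (Nat.find_min' hex ⟨k + 1, ha⟩) haq hqn⟩
  · simpa [hprev] using (hadj k).symm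
  · simpa [hprev] using hkg.symm
  · simpa [Nat.add_comm a 1, ← Nat.add_assoc] using ha.2.2.1
  · simpa [Nat.add_comm a 1, ← Nat.add_assoc] using ha.2.2.2

end CyclicSequence

lemma exists_contraction_of_blocksPairwiseAdj {V : Type*} [DecidableEq V] {F : SimpleGraph V}
    {L : List V} (hL : L.Nodup) {x : ℕ → V} (hx : ∀ i (hi : i < L.length), L[i] = x i)
    {cls : ℕ → Fin 5} (hmono : Monotone cls) (hK : BlocksPairwiseAdj (F.comap x) L.length cls) :
    ∃ f : V → Fin 5, Surjective f ∧ List.IsChain (· ≤ ·) (L.map f) ∧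
      ∀ i j : Fin 5, i ≠ j → ∃ u w, f u = i ∧ f w = j ∧ F.Adj u w := by
  have hf : ∀ i (hi : i < L.length), cls (L.idxOf L[i]) = cls i := fun i hi => by
    rw [hL.idxOf_getElem]
  refine ⟨fun u => cls (L.idxOf u), fun i => ?_, ?_, fun i j hij => ?_⟩
  · obtain ⟨j, hj⟩ := exists_ne i
    obtain ⟨p, -, -, hp, -, rfl, -⟩ := hK i j hj.symm
    exact ⟨L[p], hf p hp⟩
  · rw [List.isChain_iff_getElem]
    intro i hi
    simp only [List.getElem_map, hf]
    exact hmono (Nat.le_succ i)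
  · obtain ⟨p, q, hpq, hp, hq, rfl, rfl⟩ := hK i j hij
    exact ⟨L[p], L[q], hf p hp, hf q hq, by rwa [hx, hx]⟩

/-- If every edge of a Hamiltonian cycle `C` of `F` lies in at least three triangles of
`F`, then `K₅` can be obtained from `F` by contracting edges of `C`: there is a partition
of `V(F)` into 5 classes (fibers of `f`), each inducing a subpath of `C` (the classes
appear as consecutive blocks along a rotation of the cyclic order of `C`), such that any
two distinct classes are joined by an edge of `F`. -/
theorem cyclic_K5_minor {V : Type*} [Fintype V] [DecidableEq V]
    (F : SimpleGraph V) [DecidableRel F.Adj]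
    {v : V} (C : F.Walk v v) (hC : C.IsHamiltonianCycle)
    (htri : ∀ u w : V, s(u, w) ∈ C.edges →
      3 ≤ (Finset.univ.filter (fun z => F.Adj u z ∧ F.Adj w z)).card) :
    ∃ (f : V → Fin 5) (r : ℕ),
      Function.Surjective f ∧
      List.Chain' (· ≤ ·) ((C.support.tail.rotate r).map f) ∧
      (∀ i j : Fin 5, i ≠ j → ∃ u w : V, f u = i ∧ f w = j ∧ F.Adj u w) := by
  have hlen : 0 < C.length := by have := hC.isCycle.three_le_length; omega
  set e : ℕ → V := fun k => C.getVert (k % C.length)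
  have hedge (k : ℕ) : s(e k, e (k + 1)) ∈ C.edges := C.mk_getVert_mod_length_mem_edges hlen k
  have he : Periodic e C.length := fun k => by simp [e]
  obtain ⟨k, cls, hmono, hK⟩ := exists_blocksPairwiseAdj hlen he
    hC.surjective_getVert_mod_length (fun k => C.adj_of_mem_edges (hedge k))
    (fun k => htri _ _ (hedge k))
  have hL : (C.support.tail.rotate k).length = C.length := by simp
  obtain ⟨f, hf⟩ := exists_contraction_of_blocksPairwiseAdj
    (List.nodup_rotate.2 hC.isCycle.support_nodup) (x := fun p => e (k + 1 + p))
    (fun i hi => C.getElem_support_tail_rotate hlen k hi) hmono (hL ▸ hK)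
  exact ⟨f, k, hf⟩
end

section
/- Let C be a cycle and let M be a graph on V(C) whose edge set consists of E(C) together with chords forming a complete bipartite configuration between two disjoint arcs A and B of C (with all chords having one end in A and one in B). Then K₇ cannot be obtained from M by contracting edges of C. -/
/-!
An edge of `C` joins two vertices of the same class or of cyclically consecutive classes, so
two classes that are not cyclically consecutive can only be joined by a chord: one of them
meets `A` and the other meets `B`. A class is an interval of the cycle, so if it meets both
arcs it contains the last vertex of `A` or the last vertex of `B`; hence at most two classes
meet both arcs. The remaining five classes contain three pairwise non-consecutive ones
(a rotation of `0, 2, 4`), and the chords between them would properly 2-colour a triangle.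
-/

section

variable {α : Type*}

theorem List.Pairwise.rel_or_rel {R : α → α → Prop} {l : List α} (h : l.Pairwise R)
    {a b : α} (ha : a ∈ l) (hb : b ∈ l) (hab : a ≠ b) : R a b ∨ R b a :=
  have : Std.Symm fun x y => R x y ∨ R y x := ⟨fun _ _ => Or.symm⟩
  (h.imp (S := fun x y => R x y ∨ R y x) Or.inl).forall ha hb hab

theorem Cycle.Chain.isChain {R : α → α → Prop} {l : List α}
    (h : Cycle.Chain R (l : Cycle α)) : l.IsChain R := by
  cases l with
  | nil => exact .nil
  | cons a t =>
    rw [Cycle.chain_coe_cons] at h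
    exact h.prefix (by simp)

theorem Fin.eq_or_eq_add_one_of_pairwise {n : ℕ} {i j : Fin (n + 1)} {l₁ l₂ : List (Fin (n + 1))}
    (hs : (l₁ ++ i :: j :: l₂).Pairwise (· ≤ ·)) (hmem : i + 1 ∈ l₁ ++ i :: j :: l₂) :
    j = i ∨ j = i + 1 := by
  by_contra! hij
  obtain ⟨-, hright, hcross⟩ := List.pairwise_append.1 hs
  have hlt : i < j := lt_of_le_of_ne (List.rel_of_pairwise_cons hright (by simp)) hij.1.symm
  have hsucc : ((i + 1 : Fin (n + 1)) : ℕ) = i + 1 :=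
    Fin.val_add_one_of_lt (lt_of_lt_of_le hlt (Fin.le_last j))
  have hgap : (i : ℕ) + 1 < j := by
    have := Fin.val_ne_of_ne hij.2
    have := Fin.lt_def.1 hlt
    omega
  simp only [List.mem_append, List.mem_cons] at hmem
  rcases hmem with hk | hk | hk | hk
  · have := Fin.le_def.1 (hcross _ hk i (by simp))
    omega
  · exact absurd (congrArg Fin.val hk) (by omega)
  · exact absurd (congrArg Fin.val hk) (by omega)
  · have := Fin.le_def.1 (List.rel_of_pairwise_cons hright.of_cons hk)
    omega

theorem Fin.cycleChain_eq_or_eq_add_one {n : ℕ} {m : List (Fin (n + 1))}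
    (hm : m.IsChain (· ≤ ·)) (hall : ∀ i, i ∈ m) :
    Cycle.Chain (fun i j => j = i ∨ j = i + 1) (m : Cycle (Fin (n + 1))) := by
  have hsorted : m.Pairwise (· ≤ ·) := List.isChain_iff_pairwise.mp hm
  have hne : m ≠ [] := List.ne_nil_of_mem (hall 0)
  rw [Cycle.chain_ne_nil _ hne]
  refine List.isChain_cons.2 ⟨?_, List.isChain_iff_forall_rel_of_append_cons_cons.2
    fun i j l₁ l₂ hm => Fin.eq_or_eq_add_one_of_pairwise (hm ▸ hsorted) (hm ▸ hall (i + 1))⟩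
  obtain ⟨a, t, rfl⟩ := List.exists_cons_of_ne_nil hne
  rintro b ⟨⟩
  have ha : a = 0 := by
    rcases List.mem_cons.1 (hall 0) with h | h
    · exact h.symm
    · exact le_antisymm (List.rel_of_pairwise_cons hsorted h) (Fin.zero_le a)
  have hlast : (a :: t).getLast hne = Fin.last n := by
    rw [← List.dropLast_append_getLast hne] at hsorted hall
    rcases List.mem_append.1 (hall (Fin.last n)) with h | h
    · exact le_antisymm (Fin.le_last _) ((List.pairwise_append.1 hsorted).2.2 _ h _ (by simp))
    · exact (List.mem_singleton.1 h).symm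
  exact .inr (by rw [hlast, ha, Fin.last_add_one])

namespace SimpleGraph.Walk

variable {V : Type*} {G : SimpleGraph V} {R : V → V → Prop}

theorem rel_or_rel_of_mem_edges {u w : V} {p : G.Walk u w} (hp : p.support.IsChain R)
    {x y : V} (he : s(x, y) ∈ p.edges) : R x y ∨ R y x := by
  induction p with
  | nil => simp at he
  | cons hadj q ih =>
    rw [support_cons, ← q.cons_tail_support, List.isChain_cons_cons, q.cons_tail_support] at hp
    simp only [edges_cons, List.mem_cons, Sym2.eq_iff] at he
    rcases he with ⟨⟨rfl, rfl⟩ | ⟨rfl, rfl⟩⟩ | he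
    · exact .inl hp.1
    · exact .inr hp.1
    · exact ih hp.2 he

theorem isChain_support_of_cycleChain {v : V} {p : G.Walk v v} (hp : ¬p.Nil)
    (h : Cycle.Chain R (p.support.tail : Cycle V)) : p.support.IsChain R := by
  have hne : p.support.tail ≠ [] := by
    simp [← support_tail_of_not_nil p hp]
  rw [Cycle.chain_ne_nil R hne, List.getLast_tail, getLast_support] at h
  rwa [← p.cons_tail_support]

theorem eq_or_eq_add_one_of_mem_edges {v : V} {p : G.Walk v v} (hp : ¬p.Nil) {n : ℕ}
    {f : V → Fin (n + 1)} {r : ℕ}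
    (hsorted : ((p.support.tail.rotate r).map f).IsChain (· ≤ ·))
    (hall : ∀ i, i ∈ (p.support.tail.rotate r).map f) {x y : V} (he : s(x, y) ∈ p.edges) :
    f y = f x ∨ f y = f x + 1 ∨ f x = f y + 1 := by
  have hcyc := Fin.cycleChain_eq_or_eq_add_one hsorted hall
  rw [← Cycle.map_coe, Cycle.chain_map,
    Cycle.coe_eq_coe.2 (List.IsRotated.forall p.support.tail r)] at hcyc
  rcases p.rel_or_rel_of_mem_edges (p.isChain_support_of_cycleChain hp hcyc) he with h | h <;>
    tauto

end SimpleGraph.Walk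

theorem List.exists_cycleChain_exit [Nonempty α] {p q : List α} (h : (p ++ q).Nodup) :
    ∃ t, Cycle.Chain (fun a b => a ∈ p → b ∈ p ∨ a = t) (p ++ q : Cycle α) := by
  rcases eq_or_ne p [] with rfl | hp
  · exact ⟨Classical.arbitrary α, Cycle.chain_of_pairwise (by simp)⟩
  refine ⟨p.getLast hp, ?_⟩
  have hqp : q ++ p ≠ [] := by simp [hp]
  rw [Cycle.coe_eq_coe.2 List.isRotated_append, Cycle.chain_ne_nil _ hqp,
    List.getLast_append_of_ne_nil hqp hp, ← List.cons_append]
  have hdisj := List.disjoint_of_nodup_append h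
  refine List.IsChain.append ?_ ?_ (fun _ _ b hb _ => .inl (List.mem_of_mem_head? hb))
  · refine (List.pairwise_cons.2 ⟨fun _ _ _ => .inr rfl, ?_⟩).isChain
    exact List.pairwise_of_forall_mem_list fun a ha _ _ hap => absurd ha (hdisj hap)
  · exact (List.pairwise_of_forall_mem_list fun _ _ _ hb _ => .inl hb).isChain

theorem exists_cycleChain_exit_of_arc [DecidableEq α] [Nonempty α] {L : List α} (hL : L.Nodup)
    {X : Finset α} {r : ℕ} (hX : ((L.rotate r).take X.card).toFinset = X) :
    ∃ t, Cycle.Chain (fun a b => a ∈ X → b ∈ X ∨ a = t) (L : Cycle α) := by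
  have hnd : ((L.rotate r).take X.card ++ (L.rotate r).drop X.card).Nodup := by
    rwa [List.take_append_drop, List.nodup_rotate]
  obtain ⟨t, ht⟩ := List.exists_cycleChain_exit hnd
  rw [List.take_append_drop, Cycle.coe_eq_coe.2 (List.IsRotated.forall L r)] at ht
  have hmem : ∀ a, a ∈ (L.rotate r).take X.card ↔ a ∈ X := fun a => by
    rw [← List.mem_toFinset, hX]
  exact ⟨t, ht.imp fun a b h ha => (h ((hmem a).2 ha)).imp_left (hmem b).1⟩

section Exit

variable {β : Type*} {P Q : α → Prop} {t : α} {g : α → β} {l : List α}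

theorem List.IsChain.exit_between [Preorder β] {x y : α} {s : List α}
    (hexit : (x :: s).IsChain (fun a b => P a → P b ∨ a = t))
    (hg : (x :: s).Pairwise (fun a b => g a ≤ g b)) (hx : P x) (hy : y ∈ s) (hPy : ¬P y) :
    g x ≤ g t ∧ g t ≤ g y := by
  induction s generalizing x with
  | nil => simp at hy
  | cons z s ih =>
    rw [List.isChain_cons_cons] at hexit
    rcases hexit.1 hx with hz | rfl
    · rcases List.mem_cons.1 hy with rfl | hy
      · exact absurd hz hPy
      · have := ih hexit.2 hg.of_cons hz hy
        exact ⟨(List.rel_of_pairwise_cons hg List.mem_cons_self).trans this.1, this.2⟩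
    · exact ⟨le_rfl, List.rel_of_pairwise_cons hg hy⟩

theorem List.IsChain.pairwise_exit_between [Preorder β]
    (hexit : l.IsChain (fun a b => P a → P b ∨ a = t))
    (hg : l.Pairwise (fun a b => g a ≤ g b)) :
    l.Pairwise (fun a b => P a → ¬P b → g a ≤ g t ∧ g t ≤ g b) := by
  induction l with
  | nil => exact .nil
  | cons x s ih =>
    exact List.pairwise_cons.2 ⟨fun y hy hx hPy => hexit.exit_between hg hx hy hPy,
      ih hexit.tail hg.of_cons⟩

theorem List.IsChain.exit_eq_or_exit_eq [PartialOrder β] {tQ x y : α}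
    (hP : l.IsChain (fun a b => P a → P b ∨ a = t))
    (hQ : l.IsChain (fun a b => Q a → Q b ∨ a = tQ))
    (hg : l.Pairwise (fun a b => g a ≤ g b)) (hPQ : ∀ a, P a → ¬Q a)
    (hx : x ∈ l) (hy : y ∈ l) (hPx : P x) (hQy : Q y) (hxy : g x = g y) :
    g t = g x ∨ g tQ = g x := by
  have hne : x ≠ y := fun h => hPQ x hPx (h ▸ hQy)
  rcases ((hP.pairwise_exit_between hg).and (hQ.pairwise_exit_between hg)).rel_or_rel hx hy hne
    with ⟨h, -⟩ | ⟨-, h⟩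
  · obtain ⟨h₁, h₂⟩ := h hPx fun hPy => hPQ y hPy hQy
    exact .inl (le_antisymm (h₂.trans hxy.ge) h₁)
  · obtain ⟨h₁, h₂⟩ := h hQy (hPQ x hPx)
    exact .inr (le_antisymm h₂ (hxy.le.trans h₁))

end Exit

theorem Fin.exists_far_triple (a b : Fin 7) : ∃ i j k : Fin 7,
    (j ≠ i ∧ j ≠ i + 1 ∧ i ≠ j + 1) ∧ (k ≠ i ∧ k ≠ i + 1 ∧ i ≠ k + 1) ∧
    (k ≠ j ∧ k ≠ j + 1 ∧ j ≠ k + 1) ∧ a ∉ [i, j, k] ∧ b ∉ [i, j, k] := by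
  revert a b
  decide

theorem exists_mem_triangle_and {ι : Type*} {P Q : ι → Prop} {i j k : ι}
    (hij : P i ∧ Q j ∨ Q i ∧ P j) (hik : P i ∧ Q k ∨ Q i ∧ P k) (hjk : P j ∧ Q k ∨ Q j ∧ P k) :
    ∃ c ∈ [i, j, k], P c ∧ Q c := by
  simp only [List.mem_cons, List.not_mem_nil, or_false, exists_eq_or_imp, exists_eq_left]
  tauto

end

theorem no_cyclic_K7_in_bipartite_configuration_general {V : Type*} [DecidableEq V]
    (M : SimpleGraph V) {v : V} (C : M.Walk v v) (hC : C.IsHamiltonianCycle)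
    (A B : Finset V) (hAB : Disjoint A B)
    (hA : ∃ r : ℕ, ((C.support.tail.rotate r).take A.card).toFinset = A)
    (hB : ∃ r : ℕ, ((C.support.tail.rotate r).take B.card).toFinset = B)
    (hchord : ∀ u w : V, M.Adj u w → s(u, w) ∉ C.edges →
      ((u ∈ A ∧ w ∈ B) ∨ (u ∈ B ∧ w ∈ A))) :
    ¬ ∃ (f : V → Fin 7) (r : ℕ),
        Function.Surjective f ∧
        List.Chain' (· ≤ ·) ((C.support.tail.rotate r).map f) ∧
        (∀ i j : Fin 7, i ≠ j → ∃ u w : V, f u = i ∧ f w = j ∧ M.Adj u w) := by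
  rintro ⟨f, r, hsurj, hsorted, hK⟩
  have : Nonempty V := ⟨v⟩
  have hL : C.support.tail.Nodup := hC.isCycle.support_nodup
  have hmem (x : V) : x ∈ C.support.tail.rotate r := by
    rw [List.mem_rotate, ← C.support_tail_of_not_nil hC.isCycle.not_nil]
    exact hC.isHamiltonian_tail.mem_support x
  have hall (i : Fin 7) : i ∈ (C.support.tail.rotate r).map f := by
    obtain ⟨x, rfl⟩ := hsurj i
    exact List.mem_map_of_mem (hmem x)
  have hcross (i j : Fin 7) (hij : j ≠ i ∧ j ≠ i + 1 ∧ i ≠ j + 1) :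
      (∃ x ∈ A, f x = i) ∧ (∃ y ∈ B, f y = j) ∨ (∃ x ∈ B, f x = i) ∧ (∃ y ∈ A, f y = j) := by
    obtain ⟨u, w, rfl, rfl, hadj⟩ := hK i j hij.1.symm
    have hnot : s(u, w) ∉ C.edges := fun he =>
      absurd (C.eq_or_eq_add_one_of_mem_edges hC.isCycle.not_nil hsorted hall he) (by tauto)
    rcases hchord u w hadj hnot with ⟨hu, hw⟩ | ⟨hu, hw⟩
    exacts [.inl ⟨⟨u, hu, rfl⟩, w, hw, rfl⟩, .inr ⟨⟨u, hu, rfl⟩, w, hw, rfl⟩]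
  obtain ⟨tA, htA⟩ := exists_cycleChain_exit_of_arc hL hA.choose_spec
  obtain ⟨tB, htB⟩ := exists_cycleChain_exit_of_arc hL hB.choose_spec
  rw [← Cycle.coe_eq_coe.2 (List.IsRotated.forall _ r)] at htA htB
  have hboth (i : Fin 7) : (∃ x ∈ A, f x = i) → (∃ y ∈ B, f y = i) → f tA = i ∨ f tB = i := by
    rintro ⟨x, hx, rfl⟩ ⟨y, hy, hxy⟩
    exact htA.isChain.exit_eq_or_exit_eq htB.isChain
      (List.pairwise_map.1 (List.isChain_iff_pairwise.1 hsorted))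
      (fun _ ha hb => Finset.disjoint_left.1 hAB ha hb) (hmem x) (hmem y) hx hy hxy.symm
  obtain ⟨i, j, k, hij, hik, hjk, hA', hB'⟩ := Fin.exists_far_triple (f tA) (f tB)
  obtain ⟨c, hc, hAc, hBc⟩ :=
    exists_mem_triangle_and (P := fun c => ∃ x ∈ A, f x = c) (Q := fun c => ∃ y ∈ B, f y = c)
      (hcross i j hij) (hcross i k hik) (hcross j k hjk)
  rcases hboth c hAc hBc with h | h
  exacts [hA' (h ▸ hc), hB' (h ▸ hc)]

/-- Let `C` be a (Hamiltonian) cycle of a graph `M` whose chords form a complete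
bipartite configuration between two disjoint arcs `A` and `B` of `C` (every chord has
one end in `A` and the other in `B`). Then `K₇` cannot be obtained from `M` by
contracting edges of `C`: there is no partition of `V(C)` into 7 classes, each inducing
a subpath of `C` (the classes appear as consecutive blocks along a rotation of the
cyclic order of `C`), with every two distinct classes joined by an edge of `M`. -/
theorem no_cyclic_K7_in_bipartite_configuration {V : Type*} [Fintype V] [DecidableEq V]
    (M : SimpleGraph V) {v : V} (C : M.Walk v v) (hC : C.IsHamiltonianCycle)
    (A B : Finset V) (hAB : Disjoint A B)
    (hA : ∃ r : ℕ, ((C.support.tail.rotate r).take A.card).toFinset = A)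
    (hB : ∃ r : ℕ, ((C.support.tail.rotate r).take B.card).toFinset = B)
    (hchord : ∀ u w : V, M.Adj u w → s(u, w) ∉ C.edges →
      ((u ∈ A ∧ w ∈ B) ∨ (u ∈ B ∧ w ∈ A))) :
    ¬ ∃ (f : V → Fin 7) (r : ℕ),
        Function.Surjective f ∧
        List.Chain' (· ≤ ·) ((C.support.tail.rotate r).map f) ∧
        (∀ i j : Fin 7, i ≠ j → ∃ u w : V, f u = i ∧ f w = j ∧ M.Adj u w) :=
  no_cyclic_K7_in_bipartite_configuration_general M C hC A B hAB hA hB hchord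
end
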